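/- Let R ∈ ℝⁿˣⁿ be invertible and let x : (a,b) → ℝⁿ be differentiable. Then for all t ∈ (a,b): (i) D⁺‖x(t)‖_{∞,R} = max_{i ∈ I_∞(Rx(t))} sign((Rx(t))ᵢ)·(Rẋ(t))ᵢ + χ_{{0}}(Rx(t))·‖ẋ(t)‖_{∞,R}, where χ_{{0}}(v) = 1 if v = 0 and 0 otherwise; and (ii) ‖x(t)‖_{∞,R} · D⁺‖x(t)‖_{∞,R} = ⟦ẋ(t), x(t)⟧_{∞,R}, where ⟦u,v⟧_{∞,R} = max_{i ∈ I_∞(Rv)} (Ru)ᵢ(Rv)ᵢ is the max pairing. -/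

import Mathlib

open Filter Topology MeasureTheory

/-- The upper right Dini derivative `D⁺φ(t) = limsup_{h→0⁺} (φ(t+h)−φ(t))/h`. -/
noncomputable def DiniUpper (φ : ℝ → ℝ) (t : ℝ) : ℝ :=
  Filter.limsup (fun h : ℝ => (φ (t + h) - φ t) / h) (nhdsWithin 0 (Set.Ioi 0))

/-- `ν` is a norm on `ℝⁿ`. -/
structure IsNorm {n : ℕ} (ν : (Fin n → ℝ) → ℝ) : Prop where
  pos : ∀ x, x ≠ 0 → 0 < ν x
  homog : ∀ (a : ℝ) (x : Fin n → ℝ), ν (a • x) = |a| * ν x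
  triangle : ∀ x y, ν (x + y) ≤ ν x + ν y

/-- `P` is a weak pairing on `ℝⁿ`. -/
structure IsWeakPairing {n : ℕ} (P : (Fin n → ℝ) → (Fin n → ℝ) → ℝ) : Prop where
  subadd : ∀ x₁ x₂ y, P (x₁ + x₂) y ≤ P x₁ y + P x₂ y
  cont : ∀ y, Continuous fun x => P x y
  homog_left : ∀ (a : ℝ), 0 ≤ a → ∀ x y, P (a • x) y = a * P x y
  homog_right : ∀ (a : ℝ), 0 ≤ a → ∀ x y, P x (a • y) = a * P x y
  neg_neg : ∀ x y, P (-x) (-y) = P x y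
  posdef : ∀ x, x ≠ 0 → 0 < P x x
  cauchySchwarz : ∀ x y, |P x y| ≤ Real.sqrt (P x x) * Real.sqrt (P y y)

/-- A weak pairing `P` is compatible with the norm `ν`. -/
def Compatible {n : ℕ} (ν : (Fin n → ℝ) → ℝ)
    (P : (Fin n → ℝ) → (Fin n → ℝ) → ℝ) : Prop :=
  ∀ x, P x x = (ν x) ^ 2

/-- Deimling's inequality: `⟦x,y⟧ ≤ ‖y‖ · lim_{h→0⁺}(‖y+hx‖−‖y‖)/h`
(the one-sided limit exists for every norm). -/
def DeimlingIneq {n : ℕ} (ν : (Fin n → ℝ) → ℝ)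
    (P : (Fin n → ℝ) → (Fin n → ℝ) → ℝ) : Prop :=
  ∀ x y L, Filter.Tendsto (fun h : ℝ => (ν (y + h • x) - ν y) / h)
      (nhdsWithin 0 (Set.Ioi 0)) (nhds L) → P x y ≤ ν y * L

/-- The curve norm derivative formula: for any differentiable curve,
`‖x(t)‖ D⁺‖x(t)‖ = ⟦ẋ(t), x(t)⟧` for a.e. `t`. -/
def CurveNormDerivFormula {n : ℕ} (ν : (Fin n → ℝ) → ℝ)
    (P : (Fin n → ℝ) → (Fin n → ℝ) → ℝ) : Prop :=
  ∀ (a b : ℝ) (x x' : ℝ → Fin n → ℝ),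
    (∀ t ∈ Set.Ioo a b, HasDerivAt x (x' t) t) →
    ∀ᵐ t ∂(volume : Measure ℝ), t ∈ Set.Ioo a b →
      ν (x t) * DiniUpper (fun s => ν (x s)) t = P (x' t) (x t)

/-- The operator norm on matrices induced by the norm `ν` on `ℝⁿ`. -/
noncomputable def opNorm {n : ℕ} (ν : (Fin n → ℝ) → ℝ)
    (A : Matrix (Fin n) (Fin n) ℝ) : ℝ :=
  sSup ((fun x => ν (A.mulVec x)) '' {x | ν x = 1})

/-- `m` is the matrix measure of `A` induced by `ν`:
`m = lim_{h→0⁺} (‖I + hA‖ − 1)/h`. -/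
def HasMatrixMeasure {n : ℕ} (ν : (Fin n → ℝ) → ℝ)
    (A : Matrix (Fin n) (Fin n) ℝ) (m : ℝ) : Prop :=
  Filter.Tendsto
    (fun h : ℝ => (opNorm ν ((1 : Matrix (Fin n) (Fin n) ℝ) + h • A) - 1) / h)
    (nhdsWithin 0 (Set.Ioi 0)) (nhds m)

/-- The max pairing `⟦u,v⟧_{∞,R} = max_{i ∈ I_∞(Rv)} (Ru)ᵢ(Rv)ᵢ`, where
`I_∞(v) = {i : |vᵢ| = ‖v‖_∞}`.  Here `‖·‖` on `Fin n → ℝ` is the sup norm. -/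
noncomputable def maxPairing {n : ℕ} (R : Matrix (Fin n) (Fin n) ℝ)
    (u v : Fin n → ℝ) : ℝ :=
  sSup ((fun i => R.mulVec u i * R.mulVec v i) ''
    {i | |R.mulVec v i| = ‖R.mulVec v‖})


lemma sSup_subset_singleton_zero {S : Set ℝ} (h : S ⊆ {0}) : sSup S = 0 := by
  rcases Set.subset_singleton_iff_eq.mp h with h | h
  · simp [h]
  · simp [h]

lemma abs_add_small {a b : ℝ} (hb : |b| < |a|) :
    |a + b| = |a| + Real.sign a * b := by
  rcases lt_trichotomy a 0 with h | h | h
  · rw [Real.sign_of_neg h, abs_of_neg h] at *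
    rw [abs_of_neg (by cases abs_cases b <;> linarith)]
    ring
  · subst h; simp at hb; exact absurd hb (abs_nonneg b).not_gt
  · rw [Real.sign_of_pos h, abs_of_pos h] at *
    rw [abs_of_pos (by cases abs_cases b <;> linarith)]
    ring

lemma pi_norm_eq_abs_argmax {n : ℕ} [NeZero n] (v : Fin n → ℝ) :
    ∃ j : Fin n, ‖v‖ = |v j| := by
  obtain ⟨j, -, hj⟩ := Finset.exists_mem_eq_sup' (Finset.univ_nonempty (α := Fin n))
    (fun i => |v i|)
  refine ⟨j, le_antisymm ?_ ?_⟩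
  · refine (pi_norm_le_iff_of_nonneg (abs_nonneg _)).mpr fun i => ?_
    have h2 := Finset.le_sup' (fun i => |v i|) (Finset.mem_univ i)
    rw [hj] at h2
    exact h2
  · exact (norm_le_pi_norm v j)

lemma line_tendsto {n : ℕ} (v w : Fin n → ℝ) :
    Tendsto (fun h : ℝ => (‖v + h • w‖ - ‖v‖) / h) (𝓝[>] (0:ℝ))
      (𝓝 (sSup ((fun i => Real.sign (v i) * w i) '' {i | |v i| = ‖v‖})
        + if v = 0 then ‖w‖ else 0)) := by
  by_cases hv : v = 0
  · subst hv
    rw [if_pos rfl]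
    have h0 : sSup ((fun i => Real.sign ((0:Fin n → ℝ) i) * w i) ''
        {i | |(0:Fin n → ℝ) i| = ‖(0:Fin n → ℝ)‖}) = 0 := by
      apply sSup_subset_singleton_zero
      rintro s ⟨i, -, rfl⟩
      simp
    rw [h0, zero_add]
    apply Tendsto.congr' ?_ tendsto_const_nhds
    filter_upwards [self_mem_nhdsWithin] with h hh
    simp only [Set.mem_Ioi] at hh
    have h1 : ‖(0:Fin n → ℝ) + h • w‖ = h * ‖w‖ := by
      rw [zero_add, norm_smul, Real.norm_eq_abs, abs_of_pos hh]
    rw [h1, norm_zero, sub_zero]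
    field_simp
  · rw [if_neg hv, add_zero]
    set M := ‖v‖ with hM
    have hMpos : 0 < M := norm_pos_iff.mpr hv
    haveI : NeZero n := ⟨by rintro rfl; exact hv (Subsingleton.elim _ _)⟩
    obtain ⟨j₀, hj₀⟩ := pi_norm_eq_abs_argmax v
    set S := ((fun i => Real.sign (v i) * w i) '' {i | |v i| = ‖v‖}) with hS
    have hSfin : S.Finite := (Set.toFinite _).image _
    have hSne : S.Nonempty := ⟨_, j₀, hj₀.symm, rfl⟩
    set L := sSup S with hL
    have hLmem : L ∈ S := hSne.csSup_mem hSfin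
    have hLub : ∀ i : Fin n, |v i| = M → Real.sign (v i) * w i ≤ L :=
      fun i hi => le_csSup hSfin.bddAbove ⟨i, hi, rfl⟩
    obtain ⟨j, hjI, hjL⟩ := hLmem
    replace hjL : Real.sign (v j) * w j = L := hjL
    have hev : ∀ᶠ h in 𝓝[>] (0:ℝ), ∀ i : Fin n,
        h * |w i| < M ∧ (|v i| ≠ M → |v i| + h * |w i| < M + h * L) := by
      rw [eventually_all]
      intro i
      have t1 : Tendsto (fun h : ℝ => h * |w i|) (𝓝[>] 0) (𝓝 0) := by
        have := (tendsto_id.mono_left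
          (nhdsWithin_le_nhds : 𝓝[>] (0:ℝ) ≤ 𝓝 0)).mul_const |w i|
        simpa using this
      have e1 := t1.eventually_lt_const hMpos
      by_cases hiI : |v i| = M
      · filter_upwards [e1] with h h1; exact ⟨h1, fun hc => absurd hiI hc⟩
      · have hlt : |v i| < M := lt_of_le_of_ne (norm_le_pi_norm v i) hiI
        have t2 : Tendsto (fun h : ℝ => |v i| + h * (|w i| - L)) (𝓝[>] 0)
            (𝓝 (|v i|)) := by
          have := ((tendsto_id.mono_left
            (nhdsWithin_le_nhds : 𝓝[>] (0:ℝ) ≤ 𝓝 0)).mul_const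
            (|w i| - L)).const_add (|v i|)
          simpa using this
        have e2 := t2.eventually_lt_const hlt
        filter_upwards [e1, e2] with h h1 h2
        exact ⟨h1, fun _ => by nlinarith⟩
    apply Tendsto.congr' ?_ (tendsto_const_nhds (x := L))
    filter_upwards [self_mem_nhdsWithin, hev] with h hh hP
    simp only [Set.mem_Ioi] at hh
    have key : ∀ i : Fin n, |v i| = M →
        |v i + h * w i| = M + h * (Real.sign (v i) * w i) := by
      intro i hi
      have habs : |h * w i| < |v i| := by
        rw [abs_mul, abs_of_pos hh, hi]; exact (hP i).1
      rw [abs_add_small habs, hi]; ring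
    have hnorm : ‖v + h • w‖ = M + h * L := by
      have hlow : M + h * L ≤ ‖v + h • w‖ := by
        have h2 := norm_le_pi_norm (v + h • w) j
        rw [Real.norm_eq_abs] at h2
        simp only [Pi.add_apply, Pi.smul_apply, smul_eq_mul] at h2
        calc M + h * L = |v j + h * w j| := by rw [key j hjI, hjL]
          _ ≤ _ := h2
      have hnn : 0 ≤ M + h * L :=
        le_trans (abs_nonneg (v j + h * w j)) (le_of_eq (by rw [key j hjI, hjL]))
      refine le_antisymm ?_ hlow
      refine (pi_norm_le_iff_of_nonneg hnn).mpr fun i => ?_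
      rw [Real.norm_eq_abs]
      simp only [Pi.add_apply, Pi.smul_apply, smul_eq_mul]
      by_cases hiI : |v i| = M
      · rw [key i hiI]
        have := hLub i hiI
        nlinarith
      · calc |v i + h * w i| ≤ |v i| + |h * w i| := abs_add_le _ _
          _ = |v i| + h * |w i| := by rw [abs_mul, abs_of_pos hh]
          _ ≤ M + h * L := ((hP i).2 hiI).le
    show L = _
    rw [hnorm]
    field_simp
    ring

lemma curve_tendsto {n : ℕ} (y : ℝ → Fin n → ℝ) (w : Fin n → ℝ) (t : ℝ)
    (hy : HasDerivAt y w t) {L : ℝ}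
    (hline : Tendsto (fun h : ℝ => (‖y t + h • w‖ - ‖y t‖) / h) (𝓝[>] 0) (𝓝 L)) :
    Tendsto (fun h : ℝ => (‖y (t + h)‖ - ‖y t‖) / h) (𝓝[>] 0) (𝓝 L) := by
  have h1 : Tendsto (fun h : ℝ => ‖y (t + h) - y t - h • w‖ / h) (𝓝[>] 0) (𝓝 0) := by
    have h2 := hasDerivAt_iff_tendsto.mp hy
    have h3 : Tendsto (fun h : ℝ => t + h) (𝓝[>] (0:ℝ)) (𝓝 t) := by
      have h4 : Tendsto (fun h : ℝ => t + h) (𝓝 (0:ℝ)) (𝓝 t) := by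
        simpa using (continuous_add_left t).tendsto (0:ℝ)
      exact h4.mono_left nhdsWithin_le_nhds
    have h4 := h2.comp h3
    apply h4.congr'
    filter_upwards [self_mem_nhdsWithin] with h hh
    simp only [Set.mem_Ioi] at hh
    simp only [Function.comp, add_sub_cancel_left]
    rw [Real.norm_eq_abs, abs_of_pos hh, inv_mul_eq_div]
  have hdiff : Tendsto (fun h : ℝ => (‖y (t + h)‖ - ‖y t‖) / h
      - (‖y t + h • w‖ - ‖y t‖) / h) (𝓝[>] 0) (𝓝 0) := by
    apply squeeze_zero_norm' ?_ h1
    filter_upwards [self_mem_nhdsWithin] with h hh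
    simp only [Set.mem_Ioi] at hh
    rw [div_sub_div_same]
    have e1 : ‖y (t + h)‖ - ‖y t‖ - (‖y t + h • w‖ - ‖y t‖)
        = ‖y (t + h)‖ - ‖y t + h • w‖ := by ring
    rw [e1, Real.norm_eq_abs, abs_div, abs_of_pos hh]
    have e2 : |‖y (t + h)‖ - ‖y t + h • w‖| ≤ ‖y (t + h) - y t - h • w‖ := by
      have := abs_norm_sub_norm_le (y (t + h)) (y t + h • w)
      rwa [show y (t + h) - (y t + h • w) = y (t + h) - y t - h • w by abel] at this
    gcongr
  have h5 := hline.add hdiff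
  rw [add_zero] at h5
  exact h5.congr fun h => by ring

lemma norm_mul_line_eq {n : ℕ} (v w : Fin n → ℝ) :
    ‖v‖ * (sSup ((fun i => Real.sign (v i) * w i) '' {i | |v i| = ‖v‖})
      + if v = 0 then ‖w‖ else 0)
    = sSup ((fun i => w i * v i) '' {i | |v i| = ‖v‖}) := by
  by_cases hv : v = 0
  · subst hv
    rw [norm_zero, zero_mul]
    symm
    apply sSup_subset_singleton_zero
    rintro s ⟨i, -, rfl⟩
    simp
  · rw [if_neg hv, add_zero]
    set M := ‖v‖ with hM
    have hMpos : 0 < M := norm_pos_iff.mpr hv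
    haveI : NeZero n := ⟨by rintro rfl; exact hv (Subsingleton.elim _ _)⟩
    obtain ⟨j₀, hj₀⟩ := pi_norm_eq_abs_argmax v
    set S := ((fun i => Real.sign (v i) * w i) '' {i | |v i| = ‖v‖}) with hS
    have hSfin : S.Finite := (Set.toFinite _).image _
    have hSne : S.Nonempty := ⟨_, j₀, hj₀.symm, rfl⟩
    set L := sSup S with hL
    have hLmem : L ∈ S := hSne.csSup_mem hSfin
    have hLub : ∀ s ∈ S, s ≤ L := fun s hs => le_csSup hSfin.bddAbove hs
    have himg : ((fun i => w i * v i) '' {i | |v i| = ‖v‖})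
        = (fun r => M * r) '' S := by
      rw [hS, ← Set.image_comp]
      apply Set.image_congr
      intro i hi
      have hiM : |v i| = M := hi
      have hvi : v i = Real.sign (v i) * M := by
        rcases lt_trichotomy (v i) 0 with h | h | h
        · rw [Real.sign_of_neg h, ← hiM, abs_of_neg h]; ring
        · exfalso; rw [h] at hiM; simp at hiM; exact hMpos.ne hiM
        · rw [Real.sign_of_pos h, ← hiM, abs_of_pos h]; ring
      simp only [Function.comp]
      conv_lhs => rw [hvi]
      ring
    rw [himg]
    symm
    apply IsGreatest.csSup_eq
    constructor
    · exact ⟨L, hLmem, rfl⟩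
    · rintro z ⟨s, hs, rfl⟩
      exact mul_le_mul_of_nonneg_left (hLub s hs) hMpos.le

/-- Theorem 26 (derivative of the `ℓ∞` norm along a curve). -/
theorem ellInf_curve_norm_derivative {n : ℕ}
    (R : Matrix (Fin n) (Fin n) ℝ) (hR : IsUnit R.det)
    (a b : ℝ) (x x' : ℝ → Fin n → ℝ)
    (hx : ∀ t ∈ Set.Ioo a b, HasDerivAt x (x' t) t) :
    ∀ t ∈ Set.Ioo a b,
      -- (i)
      (DiniUpper (fun s => ‖R.mulVec (x s)‖) t
        = sSup ((fun i => Real.sign (R.mulVec (x t) i) * R.mulVec (x' t) i) ''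
            {i | |R.mulVec (x t) i| = ‖R.mulVec (x t)‖})
          + (if R.mulVec (x t) = 0 then ‖R.mulVec (x' t)‖ else 0)) ∧
      -- (ii)
      (‖R.mulVec (x t)‖ * DiniUpper (fun s => ‖R.mulVec (x s)‖) t
        = maxPairing R (x' t) (x t)) := by
  intro t ht
  have hyd : HasDerivAt (fun s => R.mulVec (x s)) (R.mulVec (x' t)) t := by
    have hL := (LinearMap.toContinuousLinearMap (Matrix.mulVecLin R)).hasFDerivAt
      (x := x t)
    have h2 := hL.comp_hasDerivAt t (hx t ht)
    exact h2
  have hline := line_tendsto (R.mulVec (x t)) (R.mulVec (x' t))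
  have hcurve := curve_tendsto (fun s => R.mulVec (x s)) (R.mulVec (x' t)) t hyd hline
  have hDini : DiniUpper (fun s => ‖R.mulVec (x s)‖) t
      = sSup ((fun i => Real.sign (R.mulVec (x t) i) * R.mulVec (x' t) i) ''
          {i | |R.mulVec (x t) i| = ‖R.mulVec (x t)‖})
        + (if R.mulVec (x t) = 0 then ‖R.mulVec (x' t)‖ else 0) := hcurve.limsup_eq
  refine ⟨hDini, ?_⟩
  rw [hDini, maxPairing]
  exact norm_mul_line_eq (R.mulVec (x t)) (R.mulVec (x' t))
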